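/- arXiv:1201.0059 — 7 statements merged into one kernel-verified Lean document; each statement's English description precedes it below -/
import Mathlib

section
/- Let τ be a double groupoid and let X, Y be squares with the same horizontal target and the same vertical target. Then there exists a unique element u of the core groupoid τ⌟ (a square whose horizontal and vertical targets are both identities at the common sink of X and Y) such that X is the composite of the barycentric subdivision placing u in the source corner, Y adjacent, and identity squares elsewhere. -/
/-- An (edge-symmetric, strict) double groupoid, presented set-theoretically:
objects, arrows of type 1, arrows of type 2, and squares, with partially
defined compositions (total functions whose axioms are guarded by
composability conditions).  `s1 X`, `t1 X` are the faces of a square in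
direction 1 (these are arrows of type 2), and `s2 X`, `t2 X` are the faces
in direction 2 (arrows of type 1).  `c1` is composition in direction 1,
`c2` in direction 2; `iota1 a` is the `c1`-identity square on the type-2
arrow `a`, and `iota2 f` the `c2`-identity square on the type-1 arrow `f`.
Every square has inverses `inv1`, `inv2` in both directions. -/
structure DoubleGroupoid where
  Obj : Type
  A1 : Type
  A2 : Type
  Sq : Type
  src1 : A1 → Obj
  tgt1 : A1 → Obj
  src2 : A2 → Obj
  tgt2 : A2 → Obj
  id1 : Obj → A1
  id2 : Obj → A2
  comp1 : A1 → A1 → A1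
  comp2 : A2 → A2 → A2
  s1 : Sq → A2
  t1 : Sq → A2
  s2 : Sq → A1
  t2 : Sq → A1
  iota1 : A2 → Sq
  iota2 : A1 → Sq
  c1 : Sq → Sq → Sq
  c2 : Sq → Sq → Sq
  inv1 : Sq → Sq
  inv2 : Sq → Sq
  -- the two edge categories are groupoid-like
  src1_id : ∀ x, src1 (id1 x) = x
  tgt1_id : ∀ x, tgt1 (id1 x) = x
  src2_id : ∀ x, src2 (id2 x) = x
  tgt2_id : ∀ x, tgt2 (id2 x) = x
  comp1_src : ∀ f g, tgt1 f = src1 g → src1 (comp1 f g) = src1 f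
  comp1_tgt : ∀ f g, tgt1 f = src1 g → tgt1 (comp1 f g) = tgt1 g
  comp2_src : ∀ f g, tgt2 f = src2 g → src2 (comp2 f g) = src2 f
  comp2_tgt : ∀ f g, tgt2 f = src2 g → tgt2 (comp2 f g) = tgt2 g
  comp1_assoc : ∀ f g h, tgt1 f = src1 g → tgt1 g = src1 h →
    comp1 (comp1 f g) h = comp1 f (comp1 g h)
  comp2_assoc : ∀ f g h, tgt2 f = src2 g → tgt2 g = src2 h →
    comp2 (comp2 f g) h = comp2 f (comp2 g h)
  comp1_id_left : ∀ f, comp1 (id1 (src1 f)) f = f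
  comp1_id_right : ∀ f, comp1 f (id1 (tgt1 f)) = f
  comp2_id_left : ∀ f, comp2 (id2 (src2 f)) f = f
  comp2_id_right : ∀ f, comp2 f (id2 (tgt2 f)) = f
  ainv1 : A1 → A1
  ainv2 : A2 → A2
  ainv1_left : ∀ f, comp1 (ainv1 f) f = id1 (tgt1 f)
  ainv1_right : ∀ f, comp1 f (ainv1 f) = id1 (src1 f)
  ainv2_left : ∀ f, comp2 (ainv2 f) f = id2 (tgt2 f)
  ainv2_right : ∀ f, comp2 f (ainv2 f) = id2 (src2 f)
  -- corner compatibility of the four faces of a square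
  corner_ss : ∀ X, src2 (s1 X) = src1 (s2 X)
  corner_st : ∀ X, tgt2 (s1 X) = src1 (t2 X)
  corner_ts : ∀ X, src2 (t1 X) = tgt1 (s2 X)
  corner_tt : ∀ X, tgt2 (t1 X) = tgt1 (t2 X)
  -- faces of the identity squares
  s1_iota1 : ∀ a, s1 (iota1 a) = a
  t1_iota1 : ∀ a, t1 (iota1 a) = a
  s2_iota1 : ∀ a, s2 (iota1 a) = id1 (src2 a)
  t2_iota1 : ∀ a, t2 (iota1 a) = id1 (tgt2 a)
  s2_iota2 : ∀ f, s2 (iota2 f) = f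
  t2_iota2 : ∀ f, t2 (iota2 f) = f
  s1_iota2 : ∀ f, s1 (iota2 f) = id2 (src1 f)
  t1_iota2 : ∀ f, t1 (iota2 f) = id2 (tgt1 f)
  -- faces of composites
  c1_s1 : ∀ X Y, t1 X = s1 Y → s1 (c1 X Y) = s1 X
  c1_t1 : ∀ X Y, t1 X = s1 Y → t1 (c1 X Y) = t1 Y
  c1_s2 : ∀ X Y, t1 X = s1 Y → s2 (c1 X Y) = comp1 (s2 X) (s2 Y)
  c1_t2 : ∀ X Y, t1 X = s1 Y → t2 (c1 X Y) = comp1 (t2 X) (t2 Y)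
  c2_s2 : ∀ X Y, t2 X = s2 Y → s2 (c2 X Y) = s2 X
  c2_t2 : ∀ X Y, t2 X = s2 Y → t2 (c2 X Y) = t2 Y
  c2_s1 : ∀ X Y, t2 X = s2 Y → s1 (c2 X Y) = comp2 (s1 X) (s1 Y)
  c2_t1 : ∀ X Y, t2 X = s2 Y → t1 (c2 X Y) = comp2 (t1 X) (t1 Y)
  -- category laws for the square compositions
  c1_assoc : ∀ X Y Z, t1 X = s1 Y → t1 Y = s1 Z →
    c1 (c1 X Y) Z = c1 X (c1 Y Z)
  c2_assoc : ∀ X Y Z, t2 X = s2 Y → t2 Y = s2 Z →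
    c2 (c2 X Y) Z = c2 X (c2 Y Z)
  c1_id_left : ∀ X, c1 (iota1 (s1 X)) X = X
  c1_id_right : ∀ X, c1 X (iota1 (t1 X)) = X
  c2_id_left : ∀ X, c2 (iota2 (s2 X)) X = X
  c2_id_right : ∀ X, c2 X (iota2 (t2 X)) = X
  -- identity squares are functorial
  iota1_comp : ∀ a b, tgt2 a = src2 b → iota1 (comp2 a b) = c2 (iota1 a) (iota1 b)
  iota2_comp : ∀ f g, tgt1 f = src1 g → iota2 (comp1 f g) = c1 (iota2 f) (iota2 g)
  -- the interchange law
  interchange : ∀ X Y Z W, t1 X = s1 Y → t2 X = s2 Z → t2 Y = s2 W → t1 Z = s1 W →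
    c2 (c1 X Y) (c1 Z W) = c1 (c2 X Z) (c2 Y W)
  -- inverses of squares in each direction
  inv1_s1 : ∀ X, s1 (inv1 X) = t1 X
  inv1_t1 : ∀ X, t1 (inv1 X) = s1 X
  inv1_s2 : ∀ X, s2 (inv1 X) = ainv1 (s2 X)
  inv1_t2 : ∀ X, t2 (inv1 X) = ainv1 (t2 X)
  inv2_s2 : ∀ X, s2 (inv2 X) = t2 X
  inv2_t2 : ∀ X, t2 (inv2 X) = s2 X
  inv2_s1 : ∀ X, s1 (inv2 X) = ainv2 (s1 X)
  inv2_t1 : ∀ X, t1 (inv2 X) = ainv2 (t1 X)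
  c1_inv1 : ∀ X, c1 X (inv1 X) = iota1 (s1 X)
  inv1_c1 : ∀ X, c1 (inv1 X) X = iota1 (t1 X)
  c2_inv2 : ∀ X, c2 X (inv2 X) = iota2 (s2 X)
  inv2_c2 : ∀ X, c2 (inv2 X) X = iota2 (t2 X)

namespace DoubleGroupoid

variable (D : DoubleGroupoid)

/-- The transmutation `u · Y` : the composite of the 2×2 barycentric
subdivision with `u` in the depth-0 (source-corner) position, `Y` in the
depth-2 (sink-corner) position, and identity squares in the remaining
positions. -/
def transmute (u Y : D.Sq) : D.Sq :=
  D.c2 (D.c1 u (D.iota2 (D.s2 Y))) (D.c1 (D.iota1 (D.s1 Y)) Y)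

/-- The source corner object of a square. -/
def srcObj (X : D.Sq) : D.Obj := D.src1 (D.s2 X)

/-- The sink (target corner) object of a square. -/
def sinkObj (X : D.Sq) : D.Obj := D.tgt1 (D.t2 X)

/-- Membership in the core groupoid `τ⌟`: both target faces are identities
at the sink object. -/
def IsCore (u : D.Sq) : Prop :=
  D.t1 u = D.id2 (D.sinkObj u) ∧ D.t2 u = D.id1 (D.sinkObj u)

/-- Membership in the core bundle `τ•` over `p`: all four boundary faces
are identities at `p`. -/
def IsBundle (u : D.Sq) (p : D.Obj) : Prop :=
  D.s1 u = D.id2 p ∧ D.t1 u = D.id2 p ∧ D.s2 u = D.id1 p ∧ D.t2 u = D.id1 p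

end DoubleGroupoid

/-- For squares `X`, `Y` with the same horizontal and vertical
targets, there is a unique core element `u` (a square whose two target edges
are identities at the common sink, with sink of `u` equal to the source corner
of `Y`) such that `X` is the composite of the barycentric subdivision with `u`
at depth 0, `Y` adjacent, and identities elsewhere, i.e. `X = u · Y`. -/
theorem transmute_transitive_free (D : DoubleGroupoid) (X Y : D.Sq)
    (h1 : D.t1 X = D.t1 Y) (h2 : D.t2 X = D.t2 Y) :
    ∃! u : D.Sq, (D.IsCore u ∧ D.sinkObj u = D.srcObj Y) ∧ X = D.transmute u Y := by

  classical
  set p := D.srcObj Y with hp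
  -- basic edge facts about B := iota2 (s2 Y)
  set B := D.iota2 (D.s2 Y) with hB
  have hs1B : D.s1 B = D.id2 p := by rw [hB, D.s1_iota2]; rfl
  have ht1B : D.t1 B = D.id2 (D.tgt1 (D.s2 Y)) := by rw [hB, D.t1_iota2]
  have hs2B : D.s2 B = D.s2 Y := by rw [hB, D.s2_iota2]
  have ht2B : D.t2 B = D.s2 Y := by rw [hB, D.t2_iota2]
  -- the candidate
  set A := D.c2 X (D.inv2 Y) with hA
  set u0 := D.c1 A (D.inv1 B) with hu0
  -- composability for A
  have hXY : D.t2 X = D.s2 (D.inv2 Y) := by rw [D.inv2_s2]; exact h2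
  have ht1A : D.t1 A = D.id2 (D.tgt1 (D.s2 Y)) := by
    rw [hA, D.c2_t1 _ _ hXY, h1, D.inv2_t1, D.ainv2_right, D.corner_ts]
  have ht2A : D.t2 A = D.s2 Y := by rw [hA, D.c2_t2 _ _ hXY, D.inv2_t2]
  have hs1invB : D.s1 (D.inv1 B) = D.id2 (D.tgt1 (D.s2 Y)) := by
    rw [D.inv1_s1, ht1B]
  have hcA : D.t1 A = D.s1 (D.inv1 B) := by rw [ht1A, hs1invB]
  -- faces of u0
  have ht1u0 : D.t1 u0 = D.id2 p := by
    rw [hu0, D.c1_t1 _ _ hcA, D.inv1_t1, hs1B]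
  have ht2u0 : D.t2 u0 = D.id1 p := by
    rw [hu0, D.c1_t2 _ _ hcA, ht2A, D.inv1_t2, ht2B, D.ainv1_right]; rfl
  have hsink : D.sinkObj u0 = p := by
    rw [DoubleGroupoid.sinkObj, ht2u0, D.tgt1_id]
  -- a general computation: if u has the right faces, transmute u Y collapses
  have key : ∀ u : D.Sq, D.t1 u = D.id2 p → D.t2 u = D.id1 p →
      D.transmute u Y = D.c2 (D.c1 u B) Y ∧ D.c1 (D.c2 (D.c2 (D.c1 u B) Y) (D.inv2 Y)) (D.inv1 B) = u := by
    intro u ht1u ht2u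
    have hc1 : D.t1 u = D.s1 B := by rw [ht1u, hs1B]
    have ht2uB : D.t2 (D.c1 u B) = D.s2 Y := by
      rw [D.c1_t2 _ _ hc1, ht2u, ht2B, hp, DoubleGroupoid.srcObj, D.comp1_id_left]
    have h1' : D.transmute u Y = D.c2 (D.c1 u B) Y := by
      rw [DoubleGroupoid.transmute, D.c1_id_left]
    refine ⟨h1', ?_⟩
    have hYinv : D.t2 Y = D.s2 (D.inv2 Y) := by rw [D.inv2_s2]
    have step1 : D.c2 (D.c2 (D.c1 u B) Y) (D.inv2 Y) = D.c1 u B := by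
      rw [D.c2_assoc _ _ _ ht2uB hYinv, D.c2_inv2, ← ht2uB, D.c2_id_right]
    rw [step1]
    have hc2 : D.t1 B = D.s1 (D.inv1 B) := by rw [D.inv1_s1]
    rw [D.c1_assoc _ _ _ hc1 hc2, D.c1_inv1, hs1B, ← ht1u, D.c1_id_right]
  -- existence: X = transmute u0 Y
  have hcoll := key u0 ht1u0 ht2u0
  have hstep : D.c1 u0 B = A := by
    have hc2 : D.t1 (D.inv1 B) = D.s1 B := by rw [D.inv1_t1]
    rw [hu0, D.c1_assoc _ _ _ hcA hc2, D.inv1_c1, ht1B, ← ht1A, D.c1_id_right]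
  have hXeq : X = D.transmute u0 Y := by
    rw [hcoll.1, hstep, hA]
    have h1c : D.t2 (D.inv2 Y) = D.s2 Y := D.inv2_t2 Y
    rw [D.c2_assoc _ _ _ hXY h1c, D.inv2_c2, ← h2, D.c2_id_right]
  refine ⟨u0, ⟨⟨⟨?_, ?_⟩, hsink⟩, hXeq⟩, ?_⟩
  · rw [ht1u0, hsink]
  · rw [ht2u0, hsink]
  · rintro u ⟨⟨⟨hcore1, hcore2⟩, hsinku⟩, hXu⟩
    rw [hsinku] at hcore1 hcore2
    have h := (key u hcore1 hcore2)
    have : X = D.c2 (D.c1 u B) Y := by rw [hXu, h.1]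
    rw [hu0, hA, this, h.2]
end

section
/- The core groupoid of a double groupoid is a groupoid: the transmutation product u·v of two elements u, v of τ⌟ (with the sink of u equal to the source of v) again lies in τ⌟, this product is associative, has identities given by doubly-degenerate identity squares, and every element has a two-sided inverse. -/
namespace CoreAux

variable {D : DoubleGroupoid}

theorem ainv1_src (f : D.A1) : D.src1 (D.ainv1 f) = D.tgt1 f := by
  have h := D.corner_ss (D.inv1 (D.iota2 f))
  rw [D.inv1_s1, D.inv1_s2, D.t1_iota2, D.s2_iota2, D.src2_id] at h
  exact h.symm

theorem ainv1_tgt (f : D.A1) : D.tgt1 (D.ainv1 f) = D.src1 f := by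
  have h := D.corner_ts (D.inv1 (D.iota2 f))
  rw [D.inv1_t1, D.inv1_s2, D.s1_iota2, D.s2_iota2, D.src2_id] at h
  exact h.symm

theorem ainv2_src (a : D.A2) : D.src2 (D.ainv2 a) = D.tgt2 a := by
  have h := D.corner_ss (D.inv2 (D.iota1 a))
  rw [D.inv2_s1, D.inv2_s2, D.s1_iota1, D.t2_iota1, D.src1_id] at h
  exact h

theorem ainv2_tgt (a : D.A2) : D.tgt2 (D.ainv2 a) = D.src2 a := by
  have h := D.corner_st (D.inv2 (D.iota1 a))
  rw [D.inv2_s1, D.inv2_t2, D.s1_iota1, D.s2_iota1, D.src1_id] at h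
  exact h

theorem ainv1_id (x : D.Obj) : D.ainv1 (D.id1 x) = D.id1 x := by
  have h1 := D.ainv1_left (D.id1 x)
  rw [D.tgt1_id] at h1
  have h2 := D.comp1_id_right (D.ainv1 (D.id1 x))
  rw [ainv1_tgt, D.src1_id] at h2
  rw [← h2, h1]

theorem ainv2_id (x : D.Obj) : D.ainv2 (D.id2 x) = D.id2 x := by
  have h1 := D.ainv2_left (D.id2 x)
  rw [D.tgt2_id] at h1
  have h2 := D.comp2_id_right (D.ainv2 (D.id2 x))
  rw [ainv2_tgt, D.src2_id] at h2
  rw [← h2, h1]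

/-- The two doubly-degenerate identity squares on an object coincide. -/
theorem iota_deg (x : D.Obj) : D.iota2 (D.id1 x) = D.iota1 (D.id2 x) := by
  have hs1E1 : D.s1 (D.iota1 (D.id2 x)) = D.id2 x := D.s1_iota1 _
  have ht1E1 : D.t1 (D.iota1 (D.id2 x)) = D.id2 x := D.t1_iota1 _
  have hs2E1 : D.s2 (D.iota1 (D.id2 x)) = D.id1 x := by rw [D.s2_iota1, D.src2_id]
  have ht2E1 : D.t2 (D.iota1 (D.id2 x)) = D.id1 x := by rw [D.t2_iota1, D.tgt2_id]
  have hs2E2 : D.s2 (D.iota2 (D.id1 x)) = D.id1 x := D.s2_iota2 _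
  have ht2E2 : D.t2 (D.iota2 (D.id1 x)) = D.id1 x := D.t2_iota2 _
  have hs1E2 : D.s1 (D.iota2 (D.id1 x)) = D.id2 x := by rw [D.s1_iota2, D.src1_id]
  have ht1E2 : D.t1 (D.iota2 (D.id1 x)) = D.id2 x := by rw [D.t1_iota2, D.tgt1_id]
  have h := D.interchange (D.iota1 (D.id2 x)) (D.iota2 (D.id1 x))
      (D.iota2 (D.id1 x)) (D.iota1 (D.id2 x))
      (by rw [ht1E1, hs1E2]) (by rw [ht2E1, hs2E2])
      (by rw [ht2E2, hs2E1]) (by rw [ht1E2, hs1E1])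
  have h1 : D.c1 (D.iota1 (D.id2 x)) (D.iota2 (D.id1 x)) = D.iota2 (D.id1 x) := by
    have := D.c1_id_left (D.iota2 (D.id1 x)); rwa [hs1E2] at this
  have h2 : D.c1 (D.iota2 (D.id1 x)) (D.iota1 (D.id2 x)) = D.iota2 (D.id1 x) := by
    have := D.c1_id_right (D.iota2 (D.id1 x)); rwa [ht1E2] at this
  have h3 : D.c2 (D.iota1 (D.id2 x)) (D.iota2 (D.id1 x)) = D.iota1 (D.id2 x) := by
    have := D.c2_id_right (D.iota1 (D.id2 x)); rwa [ht2E1] at this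
  have h4 : D.c2 (D.iota2 (D.id1 x)) (D.iota1 (D.id2 x)) = D.iota1 (D.id2 x) := by
    have := D.c2_id_left (D.iota1 (D.id2 x)); rwa [hs2E1] at this
  have h5 : D.c2 (D.iota2 (D.id1 x)) (D.iota2 (D.id1 x)) = D.iota2 (D.id1 x) := by
    have := D.c2_id_left (D.iota2 (D.id1 x)); rwa [hs2E2] at this
  have h6 : D.c1 (D.iota1 (D.id2 x)) (D.iota1 (D.id2 x)) = D.iota1 (D.id2 x) := by
    have := D.c1_id_left (D.iota1 (D.id2 x)); rwa [hs1E1] at this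
  rw [h1, h2, h3, h4, h5, h6] at h
  exact h


theorem core_tgt1_s2 {u : D.Sq} (hu : D.IsCore u) :
    D.tgt1 (D.s2 u) = D.sinkObj u := by
  have h := D.corner_ts u
  rw [hu.1, D.src2_id] at h
  exact h.symm

theorem core_tgt2_s1 {u : D.Sq} (hu : D.IsCore u) :
    D.tgt2 (D.s1 u) = D.sinkObj u := by
  have h := D.corner_st u
  rw [hu.2, D.src1_id] at h
  exact h

theorem guard_G1 {u v : D.Sq} (hu : D.IsCore u) (h : D.sinkObj u = D.srcObj v) :
    D.t1 u = D.s1 (D.iota2 (D.s2 v)) := by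
  rw [D.s1_iota2, hu.1, h]; rfl

theorem guard_G2 (v : D.Sq) : D.t1 (D.iota1 (D.s1 v)) = D.s1 v := D.t1_iota1 _

theorem row1_t2 {u v : D.Sq} (hu : D.IsCore u) (h : D.sinkObj u = D.srcObj v) :
    D.t2 (D.c1 u (D.iota2 (D.s2 v))) = D.s2 v := by
  rw [D.c1_t2 _ _ (guard_G1 hu h), D.t2_iota2, hu.2, h]
  exact D.comp1_id_left _

theorem row2_s2 (u : D.Sq) (v : D.Sq) :
    D.s2 (D.c1 (D.iota1 (D.s1 v)) v) = D.s2 v := by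
  rw [D.c1_s2 _ _ (guard_G2 v), D.s2_iota1, D.corner_ss v]
  exact D.comp1_id_left _

theorem guard_G3 {u v : D.Sq} (hu : D.IsCore u) (h : D.sinkObj u = D.srcObj v) :
    D.t2 (D.c1 u (D.iota2 (D.s2 v))) = D.s2 (D.c1 (D.iota1 (D.s1 v)) v) := by
  rw [row1_t2 hu h, row2_s2 u v]

theorem transmute_s1 {u v : D.Sq} (hu : D.IsCore u) (h : D.sinkObj u = D.srcObj v) :
    D.s1 (D.transmute u v) = D.comp2 (D.s1 u) (D.s1 v) := by
  show D.s1 (D.c2 _ _) = _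
  rw [D.c2_s1 _ _ (guard_G3 hu h), D.c1_s1 _ _ (guard_G1 hu h),
    D.c1_s1 _ _ (guard_G2 v), D.s1_iota1]

theorem transmute_t1 {u v : D.Sq} (hu : D.IsCore u) (hv : D.IsCore v)
    (h : D.sinkObj u = D.srcObj v) :
    D.t1 (D.transmute u v) = D.id2 (D.sinkObj v) := by
  show D.t1 (D.c2 _ _) = _
  rw [D.c2_t1 _ _ (guard_G3 hu h), D.c1_t1 _ _ (guard_G1 hu h),
    D.c1_t1 _ _ (guard_G2 v), D.t1_iota2, core_tgt1_s2 hv, hv.1]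
  have := D.comp2_id_left (D.id2 (D.sinkObj v))
  rwa [D.src2_id] at this

theorem transmute_s2 {u v : D.Sq} (hu : D.IsCore u) (h : D.sinkObj u = D.srcObj v) :
    D.s2 (D.transmute u v) = D.comp1 (D.s2 u) (D.s2 v) := by
  show D.s2 (D.c2 _ _) = _
  rw [D.c2_s2 _ _ (guard_G3 hu h), D.c1_s2 _ _ (guard_G1 hu h), D.s2_iota2]

theorem transmute_t2 {u v : D.Sq} (hu : D.IsCore u) (hv : D.IsCore v)
    (h : D.sinkObj u = D.srcObj v) :
    D.t2 (D.transmute u v) = D.id1 (D.sinkObj v) := by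
  show D.t2 (D.c2 _ _) = _
  rw [D.c2_t2 _ _ (guard_G3 hu h), D.c1_t2 _ _ (guard_G2 v), D.t2_iota1,
    core_tgt2_s1 hv, hv.2]
  have := D.comp1_id_left (D.id1 (D.sinkObj v))
  rwa [D.src1_id] at this

theorem transmute_sink {u v : D.Sq} (hu : D.IsCore u) (hv : D.IsCore v)
    (h : D.sinkObj u = D.srcObj v) :
    D.sinkObj (D.transmute u v) = D.sinkObj v := by
  show D.tgt1 (D.t2 _) = _
  rw [transmute_t2 hu hv h, D.tgt1_id]

theorem transmute_core {u v : D.Sq} (hu : D.IsCore u) (hv : D.IsCore v)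
    (h : D.sinkObj u = D.srcObj v) : D.IsCore (D.transmute u v) := by
  constructor
  · rw [transmute_sink hu hv h, transmute_t1 hu hv h]
  · rw [transmute_sink hu hv h, transmute_t2 hu hv h]

theorem transmute_src {u v : D.Sq} (hu : D.IsCore u) (hv : D.IsCore v)
    (h : D.sinkObj u = D.srcObj v) :
    D.srcObj (D.transmute u v) = D.srcObj u := by
  show D.src1 (D.s2 _) = _
  rw [transmute_s2 hu h]
  exact D.comp1_src _ _ ((core_tgt1_s2 hu).trans h)


theorem transmute_assoc {u v w : D.Sq} (hu : D.IsCore u) (hv : D.IsCore v)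
    (hw : D.IsCore w) (huv : D.sinkObj u = D.srcObj v)
    (hvw : D.sinkObj v = D.srcObj w) :
    D.transmute (D.transmute u v) w = D.transmute u (D.transmute v w) := by
  -- guards for the left-hand interchange
  have gA : D.t1 (D.c1 u (D.iota2 (D.s2 v))) = D.s1 (D.iota2 (D.s2 w)) := by
    rw [D.c1_t1 _ _ (guard_G1 hu huv), D.t1_iota2, D.s1_iota2, core_tgt1_s2 hv, hvw]
    rfl
  have gD : D.t1 (D.c1 (D.iota1 (D.s1 v)) v) = D.s1 (D.iota2 (D.s2 w)) := by
    rw [D.c1_t1 _ _ (guard_G2 v), hv.1, D.s1_iota2, hvw]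
    rfl
  have gC : D.t2 (D.iota2 (D.s2 w)) = D.s2 (D.iota2 (D.s2 w)) := by
    rw [D.t2_iota2, D.s2_iota2]
  have hidem : D.c2 (D.iota2 (D.s2 w)) (D.iota2 (D.s2 w)) = D.iota2 (D.s2 w) := by
    have := D.c2_id_left (D.iota2 (D.s2 w)); rwa [D.s2_iota2] at this
  have hinter1 := D.interchange (D.c1 u (D.iota2 (D.s2 v))) (D.iota2 (D.s2 w))
      (D.c1 (D.iota1 (D.s1 v)) v) (D.iota2 (D.s2 w))
      gA (guard_G3 hu huv) gC gD
  rw [hidem] at hinter1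
  have hZbt2 : D.t2 (D.c1 (D.iota1 (D.s1 v)) v) = D.id1 (D.sinkObj v) := by
    rw [D.c1_t2 _ _ (guard_G2 v), D.t2_iota1, core_tgt2_s1 hv, hv.2]
    have := D.comp1_id_left (D.id1 (D.sinkObj v)); rwa [D.src1_id] at this
  have gE : D.t2 (D.c1 (D.c1 u (D.iota2 (D.s2 v))) (D.iota2 (D.s2 w)))
      = D.s2 (D.c1 (D.c1 (D.iota1 (D.s1 v)) v) (D.iota2 (D.s2 w))) := by
    rw [D.c1_t2 _ _ gA, D.c1_s2 _ _ gD, D.t2_iota2, D.s2_iota2,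
      row1_t2 hu huv, row2_s2 u v]
  have gF : D.t2 (D.c1 (D.c1 (D.iota1 (D.s1 v)) v) (D.iota2 (D.s2 w)))
      = D.s2 (D.c1 (D.iota1 (D.s1 w)) w) := by
    rw [D.c1_t2 _ _ gD, D.t2_iota2, hZbt2, row2_s2 u w, hvw]
    exact D.comp1_id_left _
  have hL : D.transmute (D.transmute u v) w
      = D.c2 (D.c1 (D.c1 u (D.iota2 (D.s2 v))) (D.iota2 (D.s2 w)))
          (D.c2 (D.c1 (D.c1 (D.iota1 (D.s1 v)) v) (D.iota2 (D.s2 w)))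
            (D.c1 (D.iota1 (D.s1 w)) w)) := by
    show D.c2 (D.c1 (D.c2 (D.c1 u (D.iota2 (D.s2 v))) (D.c1 (D.iota1 (D.s1 v)) v))
        (D.iota2 (D.s2 w))) (D.c1 (D.iota1 (D.s1 w)) w) = _
    rw [← hinter1, D.c2_assoc _ _ _ gE gF]
  -- right-hand side
  have hs2 : D.s2 (D.transmute v w) = D.comp1 (D.s2 v) (D.s2 w) := transmute_s2 hv hvw
  have hs1 : D.s1 (D.transmute v w) = D.comp2 (D.s1 v) (D.s1 w) := transmute_s1 hv hvw
  have hfg : D.tgt1 (D.s2 v) = D.src1 (D.s2 w) := (core_tgt1_s2 hv).trans hvw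
  have hab : D.tgt2 (D.s1 v) = D.src2 (D.s1 w) := by
    rw [core_tgt2_s1 hv, hvw, D.corner_ss w]; rfl
  have giotas : D.t1 (D.iota2 (D.s2 v)) = D.s1 (D.iota2 (D.s2 w)) := by
    rw [D.t1_iota2, D.s1_iota2, hfg]
  have gYg : D.t1 v = D.s1 (D.iota2 (D.s2 w)) := guard_G1 hv hvw
  have g1 : D.t1 (D.iota1 (D.s1 v)) = D.s1 (D.c1 v (D.iota2 (D.s2 w))) := by
    rw [D.t1_iota1, D.c1_s1 _ _ gYg]
  have g2 : D.t2 (D.iota1 (D.s1 v)) = D.s2 (D.iota1 (D.s1 w)) := by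
    rw [D.t2_iota1, D.s2_iota1, core_tgt2_s1 hv, hvw, D.corner_ss w]; rfl
  have g4 : D.t1 (D.iota1 (D.s1 w)) = D.s1 (D.c1 (D.iota1 (D.s1 w)) w) := by
    rw [D.t1_iota1, D.c1_s1 _ _ (guard_G2 w), D.s1_iota1]
  have hinter2 := D.interchange (D.iota1 (D.s1 v)) (D.c1 v (D.iota2 (D.s2 w)))
      (D.iota1 (D.s1 w)) (D.c1 (D.iota1 (D.s1 w)) w)
      g1 g2 (guard_G3 hv hvw) g4
  have hWb : D.c1 (D.iota1 (D.s1 w)) (D.c1 (D.iota1 (D.s1 w)) w)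
      = D.c1 (D.iota1 (D.s1 w)) w := by
    have h := D.c1_id_left (D.c1 (D.iota1 (D.s1 w)) w)
    rwa [D.c1_s1 _ _ (guard_G2 w), D.s1_iota1] at h
  have hR : D.transmute u (D.transmute v w)
      = D.c2 (D.c1 (D.c1 u (D.iota2 (D.s2 v))) (D.iota2 (D.s2 w)))
          (D.c2 (D.c1 (D.c1 (D.iota1 (D.s1 v)) v) (D.iota2 (D.s2 w)))
            (D.c1 (D.iota1 (D.s1 w)) w)) := by
    show D.c2 (D.c1 u (D.iota2 (D.s2 (D.transmute v w))))
        (D.c1 (D.iota1 (D.s1 (D.transmute v w))) (D.transmute v w)) = _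
    rw [hs2, hs1, D.iota2_comp _ _ hfg, D.iota1_comp _ _ hab,
      ← D.c1_assoc u _ _ (guard_G1 hu huv) giotas]
    show D.c2 _ (D.c1 _ (D.c2 (D.c1 v (D.iota2 (D.s2 w)))
        (D.c1 (D.iota1 (D.s1 w)) w))) = _
    rw [← hinter2, hWb, ← D.c1_assoc _ v _ (guard_G2 v) gYg]
  rw [hL, hR]


theorem deg_sink (x : D.Obj) : D.sinkObj (D.iota1 (D.id2 x)) = x := by
  show D.tgt1 (D.t2 _) = x
  rw [D.t2_iota1, D.tgt2_id, D.tgt1_id]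

theorem deg_src (x : D.Obj) : D.srcObj (D.iota1 (D.id2 x)) = x := by
  show D.src1 (D.s2 _) = x
  rw [D.s2_iota1, D.src2_id, D.src1_id]

theorem deg_core (x : D.Obj) : D.IsCore (D.iota1 (D.id2 x)) := by
  constructor
  · rw [deg_sink]; exact D.t1_iota1 _
  · rw [deg_sink, D.t2_iota1, D.tgt2_id]

theorem left_id (u : D.Sq) : D.transmute (D.iota1 (D.id2 (D.srcObj u))) u = u := by
  show D.c2 (D.c1 (D.iota1 (D.id2 (D.srcObj u))) (D.iota2 (D.s2 u)))
    (D.c1 (D.iota1 (D.s1 u)) u) = u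
  have h1 : D.c1 (D.iota1 (D.id2 (D.srcObj u))) (D.iota2 (D.s2 u))
      = D.iota2 (D.s2 u) := by
    have := D.c1_id_left (D.iota2 (D.s2 u))
    rw [D.s1_iota2] at this
    exact this
  rw [D.c1_id_left u, h1]
  exact D.c2_id_left u

theorem right_id {u : D.Sq} (hu : D.IsCore u) :
    D.transmute u (D.iota1 (D.id2 (D.sinkObj u))) = u := by
  show D.c2 (D.c1 u (D.iota2 (D.s2 (D.iota1 (D.id2 (D.sinkObj u))))))
    (D.c1 (D.iota1 (D.s1 (D.iota1 (D.id2 (D.sinkObj u)))))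
      (D.iota1 (D.id2 (D.sinkObj u)))) = u
  rw [D.s2_iota1, D.s1_iota1, D.src2_id]
  have h2 : D.c1 (D.iota1 (D.id2 (D.sinkObj u))) (D.iota1 (D.id2 (D.sinkObj u)))
      = D.iota1 (D.id2 (D.sinkObj u)) := by
    have := D.c1_id_left (D.iota1 (D.id2 (D.sinkObj u)))
    rwa [D.s1_iota1] at this
  have h1 : D.c1 u (D.iota2 (D.id1 (D.sinkObj u))) = u := by
    rw [iota_deg, ← hu.1]
    exact D.c1_id_right u
  rw [h2, h1, ← iota_deg, ← hu.2]
  exact D.c2_id_right u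

theorem rinv {u : D.Sq} (hu : D.IsCore u) :
    ∃ v : D.Sq, D.IsCore v ∧ D.srcObj v = D.sinkObj u ∧
      D.sinkObj v = D.srcObj u ∧
      D.transmute u v = D.iota1 (D.id2 (D.srcObj u)) := by
  have gT : D.t1 u = D.s1 (D.iota2 (D.ainv1 (D.s2 u))) := by
    rw [D.s1_iota2, ainv1_src, core_tgt1_s2 hu, hu.1]
  have hTs1 : D.s1 (D.c1 u (D.iota2 (D.ainv1 (D.s2 u)))) = D.s1 u := D.c1_s1 _ _ gT
  have hTt1 : D.t1 (D.c1 u (D.iota2 (D.ainv1 (D.s2 u)))) = D.id2 (D.srcObj u) := by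
    rw [D.c1_t1 _ _ gT, D.t1_iota2, ainv1_tgt]; rfl
  have hTs2 : D.s2 (D.c1 u (D.iota2 (D.ainv1 (D.s2 u)))) = D.id1 (D.srcObj u) := by
    rw [D.c1_s2 _ _ gT, D.s2_iota2, D.ainv1_right]; rfl
  have hTt2 : D.t2 (D.c1 u (D.iota2 (D.ainv1 (D.s2 u)))) = D.ainv1 (D.s2 u) := by
    rw [D.c1_t2 _ _ gT, D.t2_iota2, hu.2]
    have h := D.comp1_id_left (D.ainv1 (D.s2 u))
    rwa [ainv1_src, core_tgt1_s2 hu] at h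
  have hvs2 : D.s2 (D.inv2 (D.c1 u (D.iota2 (D.ainv1 (D.s2 u)))))
      = D.ainv1 (D.s2 u) := by rw [D.inv2_s2, hTt2]
  have hvt2 : D.t2 (D.inv2 (D.c1 u (D.iota2 (D.ainv1 (D.s2 u)))))
      = D.id1 (D.srcObj u) := by rw [D.inv2_t2, hTs2]
  have hvt1 : D.t1 (D.inv2 (D.c1 u (D.iota2 (D.ainv1 (D.s2 u)))))
      = D.id2 (D.srcObj u) := by rw [D.inv2_t1, hTt1, ainv2_id]
  have hsink : D.sinkObj (D.inv2 (D.c1 u (D.iota2 (D.ainv1 (D.s2 u)))))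
      = D.srcObj u := by
    show D.tgt1 (D.t2 _) = _
    rw [hvt2, D.tgt1_id]
  have hsrc : D.srcObj (D.inv2 (D.c1 u (D.iota2 (D.ainv1 (D.s2 u)))))
      = D.sinkObj u := by
    show D.src1 (D.s2 _) = _
    rw [hvs2, ainv1_src, core_tgt1_s2 hu]
  refine ⟨D.inv2 (D.c1 u (D.iota2 (D.ainv1 (D.s2 u)))),
    ⟨by rw [hsink, hvt1], by rw [hsink, hvt2]⟩, hsrc, hsink, ?_⟩
  show D.c2 (D.c1 u (D.iota2 (D.s2 (D.inv2 (D.c1 u (D.iota2 (D.ainv1 (D.s2 u))))))))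
    (D.c1 (D.iota1 (D.s1 (D.inv2 (D.c1 u (D.iota2 (D.ainv1 (D.s2 u)))))))
      (D.inv2 (D.c1 u (D.iota2 (D.ainv1 (D.s2 u)))))) = _
  rw [D.c1_id_left (D.inv2 (D.c1 u (D.iota2 (D.ainv1 (D.s2 u))))), hvs2,
    D.c2_inv2, hTs2, iota_deg]

end CoreAux

/-- The core groupoid `τ⌟` of a double groupoid is a groupoid
under the transmutation product: closure (with correct source and sink),
associativity, identities given by doubly-degenerate identity squares, and
two-sided inverses. -/
theorem core_groupoid_is_groupoid (D : DoubleGroupoid) :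
    (∀ u v : D.Sq, D.IsCore u → D.IsCore v → D.sinkObj u = D.srcObj v →
      D.IsCore (D.transmute u v) ∧ D.srcObj (D.transmute u v) = D.srcObj u ∧
        D.sinkObj (D.transmute u v) = D.sinkObj v) ∧
    (∀ u v w : D.Sq, D.IsCore u → D.IsCore v → D.IsCore w →
      D.sinkObj u = D.srcObj v → D.sinkObj v = D.srcObj w →
      D.transmute (D.transmute u v) w = D.transmute u (D.transmute v w)) ∧
    (∀ u : D.Sq, D.IsCore u →
      D.transmute (D.iota1 (D.id2 (D.srcObj u))) u = u ∧
      D.transmute u (D.iota1 (D.id2 (D.sinkObj u))) = u) ∧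
    (∀ u : D.Sq, D.IsCore u → ∃ v : D.Sq, D.IsCore v ∧
      D.srcObj v = D.sinkObj u ∧ D.sinkObj v = D.srcObj u ∧
      D.transmute u v = D.iota1 (D.id2 (D.srcObj u)) ∧
      D.transmute v u = D.iota1 (D.id2 (D.sinkObj u))) := by
  open CoreAux in
  refine ⟨fun u v hu hv h =>
      ⟨transmute_core hu hv h, transmute_src hu hv h, transmute_sink hu hv h⟩,
    fun u v w hu hv hw huv hvw => transmute_assoc hu hv hw huv hvw,
    fun u hu => ⟨left_id u, right_id hu⟩,
    fun u hu => ?_⟩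
  obtain ⟨w, hwcore, hwsrc, hwsink, hRight⟩ := rinv hu
  obtain ⟨x, hxcore, hxsrc, hxsink, hxRight⟩ := rinv hwcore
  rw [hwsrc] at hxRight
  have hcore_wu : D.IsCore (D.transmute w u) := transmute_core hwcore hu hwsink
  refine ⟨w, hwcore, hwsrc, hwsink, hRight, ?_⟩
  calc D.transmute w u
      = D.transmute (D.transmute w u)
          (D.iota1 (D.id2 (D.sinkObj (D.transmute w u)))) := (right_id hcore_wu).symm
    _ = D.transmute (D.transmute w u) (D.transmute w x) := by
        rw [transmute_sink hwcore hu hwsink, ← hxRight]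
    _ = D.transmute (D.transmute (D.transmute w u) w) x :=
        (transmute_assoc hcore_wu hwcore hxcore
          ((transmute_sink hwcore hu hwsink).trans hwsrc.symm) hxsrc.symm).symm
    _ = D.transmute (D.transmute w (D.transmute u w)) x := by
        rw [transmute_assoc hwcore hu hwcore hwsink hwsrc.symm]
    _ = D.transmute w x := by
        rw [hRight, ← hwsink, right_id hwcore]
    _ = D.iota1 (D.id2 (D.sinkObj u)) := hxRight
end

section
/- Two squares X, Y in a double groupoid share all four boundary edges if and only if the unique core element u with X = u·Y lies in the core bundle τ• (i.e., u has all boundary edges identities). -/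
/-!
Absorbing the identity square `iota1 (s1 Y)` into `Y`, the transmutation `u · Y` is the vertical
composite of `u` (whiskered by `iota2 (s2 Y)`) with `Y`. Since the target faces of the core
element `u` are identities, the source faces of `u · Y` are the composites `s1 u ∘ s1 Y` and
`s2 u ∘ s2 Y`, and `X = u · Y` shares its source faces with `Y` exactly when these composites
cancel down to `s1 Y` and `s2 Y`, i.e. exactly when the source faces of `u` are identities too.
-/

namespace DoubleGroupoid

variable (D : DoubleGroupoid)

-- The edge axioms alone do not fix the ends of `ainv2 a`; read them off the square `inv2 (iota1 a)`.
theorem src2_ainv2 (a : D.A2) : D.src2 (D.ainv2 a) = D.tgt2 a := by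
  rw [← D.s1_iota1 a, ← D.inv2_s1, D.corner_ss, D.inv2_s2, D.t2_iota1, D.src1_id, D.s1_iota1]

theorem src1_ainv1 (f : D.A1) : D.src1 (D.ainv1 f) = D.tgt1 f := by
  rw [← D.s2_iota2 f, ← D.inv1_s2, ← D.corner_ss, D.inv1_s1, D.t1_iota2, D.src2_id, D.s2_iota2]

theorem comp2_eq_right_iff {a b : D.A2} (hab : D.tgt2 a = D.src2 b) :
    D.comp2 a b = b ↔ a = D.id2 (D.src2 b) := by
  constructor
  · intro h
    calc a = D.comp2 a (D.comp2 b (D.ainv2 b)) := by rw [D.ainv2_right, ← hab, D.comp2_id_right]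
      _ = D.comp2 (D.comp2 a b) (D.ainv2 b) := (D.comp2_assoc _ _ _ hab (D.src2_ainv2 b).symm).symm
      _ = D.id2 (D.src2 b) := by rw [h, D.ainv2_right]
  · rintro rfl
    exact D.comp2_id_left b

theorem comp1_eq_right_iff {f g : D.A1} (hfg : D.tgt1 f = D.src1 g) :
    D.comp1 f g = g ↔ f = D.id1 (D.src1 g) := by
  constructor
  · intro h
    calc f = D.comp1 f (D.comp1 g (D.ainv1 g)) := by rw [D.ainv1_right, ← hfg, D.comp1_id_right]
      _ = D.comp1 (D.comp1 f g) (D.ainv1 g) := (D.comp1_assoc _ _ _ hfg (D.src1_ainv1 g).symm).symm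
      _ = D.id1 (D.src1 g) := by rw [h, D.ainv1_right]
  · rintro rfl
    exact D.comp1_id_left g

theorem transmute_eq (u Y : D.Sq) :
    D.transmute u Y = D.c2 (D.c1 u (D.iota2 (D.s2 Y))) Y := by
  rw [transmute, D.c1_id_left]

variable {D}

namespace IsCore

variable {u : D.Sq} (hu : D.IsCore u)
include hu

theorem tgt2_s1 : D.tgt2 (D.s1 u) = D.sinkObj u := by
  rw [D.corner_st, hu.2, D.src1_id]

theorem tgt1_s2 : D.tgt1 (D.s2 u) = D.sinkObj u := by
  rw [← D.corner_ts, hu.1, D.src2_id]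

theorem exists_isBundle_iff :
    (∃ p, D.IsBundle u p) ↔ D.s1 u = D.id2 (D.sinkObj u) ∧ D.s2 u = D.id1 (D.sinkObj u) := by
  constructor
  · rintro ⟨p, hs1, -, hs2, ht2⟩
    have hp : D.sinkObj u = p := by rw [sinkObj, ht2, D.tgt1_id]
    rw [hp]
    exact ⟨hs1, hs2⟩
  · rintro ⟨hs1, hs2⟩
    exact ⟨D.sinkObj u, hs1, hu.1, hs2, hu.2⟩

variable {Y : D.Sq} (hY : D.sinkObj u = D.srcObj Y)
include hY

theorem t1_eq_s1_iota2 : D.t1 u = D.s1 (D.iota2 (D.s2 Y)) := by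
  rw [D.s1_iota2, hu.1, hY, srcObj]

theorem t2_c1_iota2 : D.t2 (D.c1 u (D.iota2 (D.s2 Y))) = D.s2 Y := by
  rw [D.c1_t2 _ _ (hu.t1_eq_s1_iota2 hY), D.t2_iota2, hu.2, hY, srcObj, D.comp1_id_left]

theorem s1_transmute : D.s1 (D.transmute u Y) = D.comp2 (D.s1 u) (D.s1 Y) := by
  rw [transmute_eq, D.c2_s1 _ _ (hu.t2_c1_iota2 hY), D.c1_s1 _ _ (hu.t1_eq_s1_iota2 hY)]

theorem s2_transmute : D.s2 (D.transmute u Y) = D.comp1 (D.s2 u) (D.s2 Y) := by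
  rw [transmute_eq, D.c2_s2 _ _ (hu.t2_c1_iota2 hY), D.c1_s2 _ _ (hu.t1_eq_s1_iota2 hY),
    D.s2_iota2]

end IsCore

end DoubleGroupoid

theorem share_boundary_iff_bundle_general (D : DoubleGroupoid) (X Y u : D.Sq)
    (hu : D.IsCore u) (hcomp : D.sinkObj u = D.srcObj Y)
    (hX : X = D.transmute u Y) :
    (D.s1 X = D.s1 Y ∧ D.s2 X = D.s2 Y) ↔ ∃ p : D.Obj, D.IsBundle u p := by
  have hY₁ : D.src2 (D.s1 Y) = D.sinkObj u := by rw [D.corner_ss, hcomp, DoubleGroupoid.srcObj]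
  have hY₂ : D.src1 (D.s2 Y) = D.sinkObj u := hcomp.symm
  rw [hX, hu.s1_transmute hcomp, hu.s2_transmute hcomp,
    D.comp2_eq_right_iff (by rw [hu.tgt2_s1, hY₁]), D.comp1_eq_right_iff (by rw [hu.tgt1_s2, hY₂]),
    hY₁, hY₂, hu.exists_isBundle_iff]

/-- Two squares `X`, `Y` (with common targets) share all four
boundary edges iff the core element `u` with `X = u · Y` lies in the core
bundle, i.e. all boundary edges of `u` are identities. -/
theorem share_boundary_iff_bundle (D : DoubleGroupoid) (X Y u : D.Sq)
    (h1 : D.t1 X = D.t1 Y) (h2 : D.t2 X = D.t2 Y)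
    (hu : D.IsCore u) (hcomp : D.sinkObj u = D.srcObj Y)
    (hX : X = D.transmute u Y) :
    (D.s1 X = D.s1 Y ∧ D.s2 X = D.s2 Y) ↔ ∃ p : D.Obj, D.IsBundle u p :=
  share_boundary_iff_bundle_general D X Y u hu hcomp hX
end

section
/- A double groupoid is slim (has trivial core bundle) if and only if there is at most one square for each boundary configuration: any two squares sharing all four boundary edges are equal. -/
/-- A double groupoid is slim (trivial core bundle) iff there is
at most one square per boundary configuration. -/
theorem slim_iff_unique_filler (D : DoubleGroupoid) :
    (∀ (u : D.Sq) (p : D.Obj), D.IsBundle u p → u = D.iota1 (D.id2 p)) ↔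
    (∀ X Y : D.Sq, D.s1 X = D.s1 Y → D.t1 X = D.t1 Y → D.s2 X = D.s2 Y →
      D.t2 X = D.t2 Y → X = Y) := by
  constructor
  · intro hslim X Y hs1 ht1 hs2 ht2
    have hcomp : D.t1 Y = D.s1 (D.inv1 X) := by rw [D.inv1_s1]; exact ht1.symm
    have hZs1 : D.s1 (D.c1 Y (D.inv1 X)) = D.s1 X := by
      rw [D.c1_s1 _ _ hcomp, hs1]
    have hZt1 : D.t1 (D.c1 Y (D.inv1 X)) = D.s1 X := by
      rw [D.c1_t1 _ _ hcomp, D.inv1_t1]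
    have hZs2 : D.s2 (D.c1 Y (D.inv1 X)) = D.id1 (D.src2 (D.s1 X)) := by
      rw [D.c1_s2 _ _ hcomp, D.inv1_s2, ← hs2, D.ainv1_right, D.corner_ss]
    have hZt2 : D.t2 (D.c1 Y (D.inv1 X)) = D.id1 (D.tgt2 (D.s1 X)) := by
      rw [D.c1_t2 _ _ hcomp, D.inv1_t2, ← ht2, D.ainv1_right, D.corner_st]
    have hc2 : D.t2 (D.c1 Y (D.inv1 X)) = D.s2 (D.inv2 (D.iota1 (D.s1 X))) := by
      rw [hZt2, D.inv2_s2, D.t2_iota1]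
    set Z := D.c1 Y (D.inv1 X) with hZdef
    set I := D.iota1 (D.s1 X) with hIdef
    set p := D.src2 (D.s1 X) with hpdef
    have hbundle : D.IsBundle (D.c2 Z (D.inv2 I)) p := by
      refine ⟨?_, ?_, ?_, ?_⟩
      · rw [D.c2_s1 _ _ hc2, hZs1, D.inv2_s1, hIdef, D.s1_iota1, D.ainv2_right]
      · rw [D.c2_t1 _ _ hc2, hZt1, D.inv2_t1, hIdef, D.t1_iota1, D.ainv2_right]
      · rw [D.c2_s2 _ _ hc2, hZs2]
      · rw [D.c2_t2 _ _ hc2, D.inv2_t2, hIdef, D.s2_iota1]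
    have hu := hslim _ _ hbundle
    have hZeq : Z = I := by
      have h1 : D.c2 (D.c2 Z (D.inv2 I)) I = Z := by
        rw [D.c2_assoc _ _ _ hc2 (by rw [D.inv2_t2]), D.inv2_c2]
        have : D.t2 I = D.t2 Z := by rw [hIdef, D.t2_iota1, hZt2]
        rw [this, D.c2_id_right]
      have h2 : D.c2 (D.iota1 (D.id2 p)) I = I := by
        rw [hIdef, ← D.iota1_comp _ _ (by rw [D.tgt2_id])]
        congr 1
        have : p = D.src2 (D.s1 X) := hpdef
        rw [this, D.comp2_id_left]
      rw [hu, h2] at h1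
      exact h1.symm
    have hfin : D.c1 Z X = Y := by
      rw [hZdef, D.c1_assoc _ _ _ hcomp (by rw [D.inv1_t1]), D.inv1_c1,
        ht1, D.c1_id_right]
    rw [hZeq, hIdef, D.c1_id_left] at hfin
    exact hfin
  · rintro huniq u p ⟨h1, h2, h3, h4⟩
    apply huniq
    · rw [h1, D.s1_iota1]
    · rw [h2, D.t1_iota1]
    · rw [h3, D.s2_iota1, D.src2_id]
    · rw [h4, D.t2_iota1, D.tgt2_id]
end

section
/- The double groupoid Γ(G,H₁,H₂) of commutative squares is exclusive if and only if the intersection H₁ ∩ H₂ is discrete (contains only identity arrows). -/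
open CategoryTheory

/-- A commutative square of the double groupoid `Γ(G,H₁,H₂)`: the boundary
consists of `top : a ⟶ b` and `bot : c ⟶ d` in the subgroupoid `S₁`
(horizontal edges) and `left : a ⟶ c`, `right : b ⟶ d` in the subgroupoid
`S₂` (vertical edges), and the two source-to-sink composites in `G` agree. -/
structure GammaSq {G : Type*} [Groupoid G] (S₁ S₂ : Subgroupoid G)
    {a b c d : G} (top : a ⟶ b) (left : a ⟶ c) (right : b ⟶ d)
    (bot : c ⟶ d) : Prop where
  top_mem : top ∈ S₁.arrows a b
  bot_mem : bot ∈ S₁.arrows c d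
  left_mem : left ∈ S₂.arrows a c
  right_mem : right ∈ S₂.arrows b d
  comm : top ≫ right = left ≫ bot

/-- The double groupoid `Γ(G,H₁,H₂)` of commutative squares is
exclusive iff the intersection `H₁ ∩ H₂` is discrete (contains only identity
arrows).  A core square is one whose two target edges are identities. -/
theorem gamma_exclusive_iff_discrete_intersection {G : Type*} [Groupoid G]
    (S₁ S₂ : Subgroupoid G) (hw₁ : S₁.IsWide) (hw₂ : S₂.IsWide) :
    (∀ (a b : G) (t l : a ⟶ b), GammaSq S₁ S₂ t l (𝟙 b) (𝟙 b) →
      ∃ h : a = b, t = eqToHom h ∧ l = eqToHom h) ↔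
    (∀ (a b : G) (f : a ⟶ b), f ∈ S₁.arrows a b → f ∈ S₂.arrows a b →
      ∃ h : a = b, f = eqToHom h) := by
  constructor
  · intro hex a b f hf1 hf2
    obtain ⟨h, ht, _⟩ := hex a b f f
      ⟨hf1, hw₁.wide b, hf2, hw₂.wide b, rfl⟩
    exact ⟨h, ht⟩
  · intro hdisc a b t l hsq
    have htl : t = l := by simpa using hsq.comm
    obtain ⟨h, ht⟩ := hdisc a b t hsq.top_mem (htl ▸ hsq.left_mem)
    exact ⟨h, ht, htl ▸ ht⟩
end

section
/- The double groupoid Γ(G,H₁,H₂) of commutative squares is maximal if and only if H₁H₂ = H₂H₁, i.e., every composable product h₁h₂ with h₁ ∈ H₁, h₂ ∈ H₂ can be rewritten as h₂'h₁' with h₂' ∈ H₂, h₁' ∈ H₁, and vice versa. -/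
open CategoryTheory

/-- The double groupoid `Γ(G,H₁,H₂)` of commutative squares is
maximal (every pair of a horizontal and a vertical arrow with common target
extends to a square having these as its target edges) iff `H₁H₂ = H₂H₁`. -/
theorem gamma_maximal_iff_products_commute {G : Type*} [Groupoid G]
    (S₁ S₂ : Subgroupoid G) (hw₁ : S₁.IsWide) (hw₂ : S₂.IsWide) :
    (∀ (b c d : G) (f₁ : c ⟶ d) (f₂ : b ⟶ d), f₁ ∈ S₁.arrows c d →
      f₂ ∈ S₂.arrows b d →
      ∃ (a : G) (t : a ⟶ b) (l : a ⟶ c), GammaSq S₁ S₂ t l f₂ f₁) ↔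
    ((∀ (x y z : G) (h₁ : x ⟶ y) (h₂ : y ⟶ z), h₁ ∈ S₁.arrows x y →
        h₂ ∈ S₂.arrows y z →
        ∃ (w : G) (k₂ : x ⟶ w) (k₁ : w ⟶ z), k₂ ∈ S₂.arrows x w ∧
          k₁ ∈ S₁.arrows w z ∧ k₂ ≫ k₁ = h₁ ≫ h₂) ∧
     (∀ (x y z : G) (k₂ : x ⟶ y) (k₁ : y ⟶ z), k₂ ∈ S₂.arrows x y →
        k₁ ∈ S₁.arrows y z →
        ∃ (w : G) (h₁ : x ⟶ w) (h₂ : w ⟶ z), h₁ ∈ S₁.arrows x w ∧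
          h₂ ∈ S₂.arrows w z ∧ h₁ ≫ h₂ = k₂ ≫ k₁)) := by
  constructor
  · intro hmax
    constructor
    · intro x y z h₁ h₂ m₁ m₂
      obtain ⟨a, t, l, sq⟩ := hmax z x y h₁ (Groupoid.inv h₂) m₁ (S₂.inv m₂)
      refine ⟨a, Groupoid.inv l, t, S₂.inv sq.left_mem, sq.top_mem, ?_⟩
      have hc := sq.comm
      rw [Groupoid.inv_eq_inv] at hc ⊢
      rw [IsIso.inv_comp_eq]
      rw [IsIso.comp_inv_eq] at hc
      rw [hc, Category.assoc]
    · intro x y z k₂ k₁ m₂ m₁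
      obtain ⟨a, t, l, sq⟩ := hmax x z y (Groupoid.inv k₁) k₂ (S₁.inv m₁) m₂
      refine ⟨a, Groupoid.inv t, l, S₁.inv sq.top_mem, sq.left_mem, ?_⟩
      have hc := sq.comm
      rw [Groupoid.inv_eq_inv] at hc ⊢
      rw [IsIso.eq_comp_inv] at hc
      rw [IsIso.inv_comp_eq, ← Category.assoc, hc]
  · rintro ⟨h12, _⟩ b c d f₁ f₂ m₁ m₂
    obtain ⟨w, k₂, k₁, n₂, n₁, hcomp⟩ :=
      h12 c d b f₁ (Groupoid.inv f₂) m₁ (S₂.inv m₂)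
    refine ⟨w, k₁, Groupoid.inv k₂, n₁, m₁, S₂.inv n₂, m₂, ?_⟩
    rw [Groupoid.inv_eq_inv] at hcomp ⊢
    rw [IsIso.eq_comp_inv] at hcomp
    rw [IsIso.eq_inv_comp, ← Category.assoc, hcomp]
end

section
/- Given a groupoid G with subgroupoids H₁, H₂ such that H₁ ∩ H₂ is discrete and G = H₁H₂ (every arrow of G factors, necessarily uniquely, as an arrow of H₁ followed by an arrow of H₂), the diagonal composition on the vacant double groupoid Γ(G,H₁,H₂) — defined by filling the 2×2 barycentric subdivision with the unique fillers — makes the set of squares into a groupoid whose arrow set is in bijection with the arrows of G via source-to-sink composition. -/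
open CategoryTheory

/-- A square of `Γ(G,H₁,H₂)` together with its boundary data. -/
structure GSq {G : Type*} [Groupoid G] (S₁ S₂ : Subgroupoid G) where
  a : G
  b : G
  c : G
  d : G
  top : a ⟶ b
  left : a ⟶ c
  right : b ⟶ d
  bot : c ⟶ d
  is : GammaSq S₁ S₂ top left right bot

lemma fact_unique {G : Type*} [Groupoid G] (S₁ S₂ : Subgroupoid G)
    (hdisc : ∀ (a b : G) (f : a ⟶ b), f ∈ S₁.arrows a b → f ∈ S₂.arrows a b →
      ∃ h : a = b, f = eqToHom h)
    {a b b' d : G} {h₁ : a ⟶ b} {h₂ : b ⟶ d} {h₁' : a ⟶ b'} {h₂' : b' ⟶ d}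
    (m₁ : h₁ ∈ S₁.arrows a b) (m₂ : h₂ ∈ S₂.arrows b d)
    (m₁' : h₁' ∈ S₁.arrows a b') (m₂' : h₂' ∈ S₂.arrows b' d)
    (e : h₁ ≫ h₂ = h₁' ≫ h₂') : ∃ hb : b = b', HEq h₁ h₁' ∧ HEq h₂ h₂' := by
  have key : Groupoid.inv h₁' ≫ h₁ = h₂' ≫ Groupoid.inv h₂ := by
    simp only [Groupoid.inv_eq_inv]
    rw [IsIso.eq_comp_inv, Category.assoc, IsIso.inv_comp_eq]
    exact e
  have mS1 : Groupoid.inv h₁' ≫ h₁ ∈ S₁.arrows b' b := S₁.mul (S₁.inv m₁') m₁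
  have mS2 : Groupoid.inv h₁' ≫ h₁ ∈ S₂.arrows b' b := by
    rw [key]; exact S₂.mul m₂' (S₂.inv m₂)
  obtain ⟨hb, hf⟩ := hdisc _ _ _ mS1 mS2
  subst hb
  simp only [eqToHom_refl] at hf
  have e1 : h₁ = h₁' := by
    rw [Groupoid.inv_eq_inv] at hf
    rwa [IsIso.inv_comp_eq, Category.comp_id] at hf
  subst e1
  have e2 : h₂ = h₂' := by
    rwa [cancel_epi h₁] at e
  subst e2
  exact ⟨rfl, HEq.rfl, HEq.rfl⟩

lemma sigma_mk_eq {G : Type*} [Groupoid G] {p q : G × G}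
    (f : p.1 ⟶ p.2) (g : q.1 ⟶ q.2) (h : p = q) (hh : HEq f g) :
    (⟨p, f⟩ : Σ p : G × G, p.1 ⟶ p.2) = ⟨q, g⟩ := by
  subst h; rw [eq_of_heq hh]


/-- For a groupoid `G` with wide subgroupoids `H₁`, `H₂` with
discrete intersection and `G = H₁H₂`, the diagonal composition on the vacant
double groupoid `Γ(G,H₁,H₂)` makes its squares a groupoid identified with `G`:
source-to-sink composition is a bijection from squares onto arrows of `G`, and
for composable squares there is a unique square whose diagonal is the
composite of the two diagonals (the diagonal product). -/
theorem gamma_vacant_diagonal_groupoid {G : Type*} [Groupoid G]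
    (S₁ S₂ : Subgroupoid G) (hw₁ : S₁.IsWide) (hw₂ : S₂.IsWide)
    (hdisc : ∀ (a b : G) (f : a ⟶ b), f ∈ S₁.arrows a b → f ∈ S₂.arrows a b →
      ∃ h : a = b, f = eqToHom h)
    (hfact : ∀ (a b : G) (g : a ⟶ b), ∃ (c : G) (h₁ : a ⟶ c) (h₂ : c ⟶ b),
      h₁ ∈ S₁.arrows a c ∧ h₂ ∈ S₂.arrows c b ∧ h₁ ≫ h₂ = g) :
    Function.Bijective
      (fun X : GSq S₁ S₂ => (⟨(X.a, X.d), X.top ≫ X.right⟩ :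
        Σ p : G × G, p.1 ⟶ p.2)) ∧
    ∀ (X Y : GSq S₁ S₂) (h : X.d = Y.a),
      ∃! Z : GSq S₁ S₂, ∃ (ha : Z.a = X.a) (hd : Z.d = Y.d),
        Z.top ≫ Z.right =
          eqToHom ha ≫ (X.top ≫ X.right) ≫ eqToHom h ≫ (Y.top ≫ Y.right) ≫
            eqToHom hd.symm := by
  -- swapped discreteness
  have hdisc' : ∀ (a b : G) (f : a ⟶ b), f ∈ S₂.arrows a b → f ∈ S₁.arrows a b →
      ∃ h : a = b, f = eqToHom h := fun a b f h2 h1 => hdisc a b f h1 h2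
  -- S₂-then-S₁ factorization
  have hfact' : ∀ (a b : G) (g : a ⟶ b), ∃ (c : G) (k₂ : a ⟶ c) (k₁ : c ⟶ b),
      k₂ ∈ S₂.arrows a c ∧ k₁ ∈ S₁.arrows c b ∧ k₂ ≫ k₁ = g := by
    intro a b g
    obtain ⟨c, h₁, h₂, m₁, m₂, he⟩ := hfact b a (Groupoid.inv g)
    refine ⟨c, Groupoid.inv h₂, Groupoid.inv h₁, S₂.inv m₂, S₁.inv m₁, ?_⟩
    simp only [Groupoid.inv_eq_inv] at *
    rw [← IsIso.inv_comp]; simp [he]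
  have hinj : Function.Injective
      (fun X : GSq S₁ S₂ => (⟨(X.a, X.d), X.top ≫ X.right⟩ :
        Σ p : G × G, p.1 ⟶ p.2)) := by
    rintro ⟨a, b, c, d, t, l, r, bo, is⟩ ⟨a', b', c', d', t', l', r', bo', is'⟩ hXY
    rw [Sigma.ext_iff, Prod.ext_iff] at hXY
    obtain ⟨⟨ha, hd⟩, hh⟩ := hXY
    dsimp at ha hd hh
    subst ha; subst hd
    have e : t ≫ r = t' ≫ r' := eq_of_heq hh
    obtain ⟨hb, ht, hr⟩ := fact_unique S₁ S₂ hdisc is.top_mem is.right_mem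
      is'.top_mem is'.right_mem e
    subst hb
    obtain rfl := eq_of_heq ht
    obtain rfl := eq_of_heq hr
    have e2 : l ≫ bo = l' ≫ bo' := by rw [← is.comm, ← is'.comm]
    obtain ⟨hc, hl, hbo⟩ := fact_unique S₂ S₁ hdisc' is.left_mem is.bot_mem
      is'.left_mem is'.bot_mem e2
    subst hc
    obtain rfl := eq_of_heq hl
    obtain rfl := eq_of_heq hbo
    rfl
  have hsurj : Function.Surjective
      (fun X : GSq S₁ S₂ => (⟨(X.a, X.d), X.top ≫ X.right⟩ :
        Σ p : G × G, p.1 ⟶ p.2)) := by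
    rintro ⟨⟨a, d⟩, g⟩
    obtain ⟨b, h₁, h₂, m₁, m₂, he⟩ := hfact a d g
    obtain ⟨c, k₂, k₁, n₂, n₁, ke⟩ := hfact' a d g
    exact ⟨⟨a, b, c, d, h₁, k₂, h₂, k₁, ⟨m₁, n₁, n₂, m₂, by rw [he, ke]⟩⟩,
      by simp [he]⟩
  refine ⟨⟨hinj, hsurj⟩, ?_⟩
  intro X Y h
  set C : X.a ⟶ Y.d := (X.top ≫ X.right) ≫ eqToHom h ≫ (Y.top ≫ Y.right) with hC
  obtain ⟨Z, hZ⟩ := hsurj ⟨(X.a, Y.d), C⟩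
  rw [Sigma.ext_iff, Prod.ext_iff] at hZ
  obtain ⟨⟨ha, hd⟩, hh⟩ := hZ
  dsimp at ha hd hh
  refine ⟨Z, ⟨ha, hd, ?_⟩, ?_⟩
  · have := (conj_eqToHom_iff_heq (Z.top ≫ Z.right) C ha hd).mpr hh
    rw [this, hC]
    simp
  · rintro Z' ⟨ha', hd', he'⟩
    apply hinj
    refine sigma_mk_eq _ _ (by rw [Prod.ext_iff]; exact ⟨ha'.trans ha.symm, hd'.trans hd.symm⟩) ?_
    have h1 : HEq (Z'.top ≫ Z'.right) C := by
      rw [← conj_eqToHom_iff_heq (Z'.top ≫ Z'.right) C ha' hd']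
      rw [he', hC]; simp
    exact h1.trans hh.symm
end
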